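/- Let T be a rooted tree with a weight w(v) ≥ 0 on each vertex, let each vertex x have positions left(x) < right(x) in the bracket sequence of T, let s be an array indexed by the positions of the bracket sequence, and let u be an ancestor of v. Then adding a value t to all positions in the interval [left(u), left(v)] increases s[left(x)] - s[right(x)] by t exactly when x lies on the path from u to v, and leaves s[left(x)] - s[right(x)] unchanged for all x not on the path. -/

import Mathlib

inductive RTree (α : Type) where
  | node : α → List (RTree α) → RTree α

namespace RTree
variable {α : Type} [DecidableEq α]

def label : RTree α → α | node a _ => a
def children : RTree α → List (RTree α) | node _ ts => ts

mutual
def preorder : RTree α → List α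
  | .node a ts => a :: preorderList ts
def preorderList : List (RTree α) → List α
  | [] => []
  | t :: ts => preorder t ++ preorderList ts
end

mutual
def bracket : RTree α → List α
  | .node a ts => a :: (bracketList ts ++ [a])
def bracketList : List (RTree α) → List α
  | [] => []
  | t :: ts => bracket t ++ bracketList ts
end

inductive Subtree : RTree α → RTree α → Prop
  | refl (t) : Subtree t t
  | child {t c s} : c ∈ children t → Subtree c s → Subtree t s

/-- `u` is a proper ancestor of `v` in `t`. -/
def ProperAncestor (t : RTree α) (u v : α) : Prop :=
  ∃ s, Subtree t s ∧ s.label = u ∧ v ∈ preorder s ∧ u ≠ v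

/-- `u` is a (weak) ancestor of `v` in `t`. -/
def Ancestor (t : RTree α) (u v : α) : Prop :=
  ∃ s, Subtree t s ∧ s.label = u ∧ v ∈ preorder s

/-- preorder index (0-based). -/
def idx (t : RTree α) (v : α) : ℕ := (preorder t).idxOf v

/-- position of the entering (left) bracket of `v`. -/
def leftB (t : RTree α) (v : α) : ℕ := (bracket t).idxOf v

/-- position of the exiting (right) bracket of `v` (last occurrence). -/
def rightB (t : RTree α) (v : α) : ℕ :=
  (bracket t).length - 1 - (bracket t).reverse.idxOf v

mutual
def depthList : RTree α → ℕ → List (α × ℕ)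
  | .node a ts, d => (a, d) :: depthListL ts (d+1)
def depthListL : List (RTree α) → ℕ → List (α × ℕ)
  | [], _ => []
  | t :: ts, d => depthList t d ++ depthListL ts d
end

/-- depth of vertex `v` in `t` (distance from the root). -/
def depth (t : RTree α) (v : α) : ℕ :=
  (((depthList t 0).filter (fun p => p.1 = v)).map (·.2)).headD 0

end RTree

set_option linter.unusedSectionVars false

namespace RTree
variable {α : Type} [DecidableEq α]

theorem preorderList_append (l r : List (RTree α)) :
    preorderList (l ++ r) = preorderList l ++ preorderList r := by
  induction l with
  | nil => simp [preorderList]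
  | cons t ts ih => simp [preorderList, ih]

theorem bracketList_append (l r : List (RTree α)) :
    bracketList (l ++ r) = bracketList l ++ bracketList r := by
  induction l with
  | nil => simp [bracketList]
  | cons t ts ih => simp [bracketList, ih]

mutual
theorem mem_bracket {x : α} (t : RTree α) : x ∈ bracket t ↔ x ∈ preorder t := by
  match t with
  | .node a ts =>
    simp [bracket, preorder, mem_bracketList ts]
    tauto
theorem mem_bracketList {x : α} (ts : List (RTree α)) :
    x ∈ bracketList ts ↔ x ∈ preorderList ts := by
  match ts with
  | [] => simp [bracketList, preorderList]
  | t :: ts => simp [bracketList, preorderList, mem_bracket t, mem_bracketList ts]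
end

theorem label_mem_preorder (t : RTree α) : t.label ∈ preorder t := by
  match t with
  | .node a ts => simp [label, preorder]

theorem subtree_trans {t c s : RTree α} (h1 : Subtree t c) (h2 : Subtree c s) :
    Subtree t s := by
  induction h1 with
  | refl => exact h2
  | child hc _ ih => exact Subtree.child hc (ih h2)

mutual
theorem exists_subtree_of_mem {x : α} (t : RTree α) (h : x ∈ preorder t) :
    ∃ s, Subtree t s ∧ s.label = x := by
  match t with
  | .node a ts =>
    simp [preorder] at h
    rcases h with rfl | h
    · exact ⟨.node x ts, Subtree.refl _, rfl⟩
    · obtain ⟨c, hc, s, hs, hl⟩ := exists_subtreeL_of_mem ts h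
      exact ⟨s, Subtree.child hc hs, hl⟩
theorem exists_subtreeL_of_mem {x : α} (ts : List (RTree α)) (h : x ∈ preorderList ts) :
    ∃ c ∈ ts, ∃ s, Subtree c s ∧ s.label = x := by
  match ts with
  | t :: ts =>
    simp [preorderList] at h
    rcases h with h | h
    · obtain ⟨s, hs, hl⟩ := exists_subtree_of_mem t h
      exact ⟨t, by simp, s, hs, hl⟩
    · obtain ⟨c, hc, s, hs, hl⟩ := exists_subtreeL_of_mem ts h
      exact ⟨c, by simp [hc], s, hs, hl⟩
end

theorem mem_children_subtree {t c : RTree α} (h : c ∈ children t) : Subtree t c :=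
  Subtree.child h (Subtree.refl _)

theorem preorder_sublist_of_mem {c : RTree α} {ts : List (RTree α)} (h : c ∈ ts) :
    List.Sublist (preorder c) (preorderList ts) := by
  induction ts with
  | nil => simp at h
  | cons t ts ih =>
    rcases List.mem_cons.mp h with rfl | h
    · simp [preorderList]
    · show List.Sublist _ (preorder t ++ preorderList ts)
      exact (ih h).trans (List.sublist_append_right _ _)

theorem preorder_sublist {t s : RTree α} (h : Subtree t s) :
    List.Sublist (preorder s) (preorder t) := by
  induction h with
  | refl => exact List.Sublist.refl _
  | @child t c s hc _ ih =>
    match t with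
    | .node a ts =>
      have hc' : c ∈ ts := hc
      show List.Sublist _ (a :: preorderList ts)
      exact ih.trans ((preorder_sublist_of_mem hc').trans (List.sublist_cons_self _ _))

theorem indexOf_append_left {x : α} {M : List α} (Q : List α) (h : x ∈ M) :
    (M ++ Q).idxOf x = M.idxOf x := by
  induction M with
  | nil => simp at h
  | cons a M ih =>
    by_cases hx : a = x
    · subst hx; simp
    · have hxm : x ∈ M := (List.mem_cons.mp h).resolve_left (fun e => hx e.symm)
      simp only [List.cons_append, List.idxOf_cons_ne _ hx, ih hxm]

theorem pos_shift {t s : RTree α} {P Q : List α} (hb : bracket t = P ++ bracket s ++ Q)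
    {x : α} (hxs : x ∈ bracket s) (hxP : x ∉ P) (hxQ : x ∉ Q) :
    leftB t x = P.length + leftB s x ∧ rightB t x = P.length + rightB s x := by
  have hlen : (bracket t).length = P.length + (bracket s).length + Q.length := by
    simp [hb]; omega
  constructor
  · rw [leftB, hb, List.append_assoc, List.idxOf_append_of_notMem hxP,
      indexOf_append_left _ hxs]
    rfl
  · have hrev : (bracket t).reverse = Q.reverse ++ ((bracket s).reverse ++ P.reverse) := by
      simp [hb]
    have hxQ' : x ∉ Q.reverse := by simpa using hxQ
    have hxs' : x ∈ (bracket s).reverse := by simpa using hxs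
    have hidx : (bracket t).reverse.idxOf x
        = Q.length + (bracket s).reverse.idxOf x := by
      rw [hrev, List.idxOf_append_of_notMem hxQ', indexOf_append_left _ hxs']
      simp
    have hr : (bracket s).reverse.idxOf x < (bracket s).length := by
      simpa using List.idxOf_lt_length_iff.mpr hxs'
    rw [rightB, rightB, hlen, hidx]
    omega

theorem pos_range {t : RTree α} {P M Q : List α} (hb : bracket t = P ++ M ++ Q)
    {x : α} (hxM : x ∈ M) (hxP : x ∉ P) (hxQ : x ∉ Q) :
    P.length ≤ leftB t x ∧ leftB t x < P.length + M.length ∧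
    P.length ≤ rightB t x ∧ rightB t x < P.length + M.length := by
  have hlen : (bracket t).length = P.length + M.length + Q.length := by
    simp [hb]; omega
  have hL : leftB t x = P.length + M.idxOf x := by
    rw [leftB, hb, List.append_assoc, List.idxOf_append_of_notMem hxP,
      indexOf_append_left _ hxM]
  have hiM : M.idxOf x < M.length := List.idxOf_lt_length_iff.mpr hxM
  have hrev : (bracket t).reverse = Q.reverse ++ (M.reverse ++ P.reverse) := by
    simp [hb]
  have hxQ' : x ∉ Q.reverse := by simpa using hxQ
  have hxM' : x ∈ M.reverse := by simpa using hxM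
  have hidx : (bracket t).reverse.idxOf x = Q.length + M.reverse.idxOf x := by
    rw [hrev, List.idxOf_append_of_notMem hxQ', indexOf_append_left _ hxM']
    simp
  have hr : M.reverse.idxOf x < M.length := by
    simpa using List.idxOf_lt_length_iff.mpr hxM'
  have hR : rightB t x = (P.length + M.length + Q.length) - 1 - (Q.length + M.reverse.idxOf x) := by
    rw [rightB, hlen, hidx]
  omega

theorem bracket_node (a : α) (ts : List (RTree α)) :
    bracket (node a ts) = a :: (bracketList ts ++ [a]) := rfl

theorem leftB_node_label (a : α) (ts : List (RTree α)) : leftB (node a ts) a = 0 := by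
  simp [leftB, bracket_node]

theorem rightB_node_label (a : α) (ts : List (RTree α)) :
    rightB (node a ts) a = (bracketList ts).length + 1 := by
  have h : (bracket (node a ts)).reverse = a :: ((bracketList ts).reverse ++ [a]) := by
    simp [bracket_node]
  simp [rightB, h, bracket_node]

theorem rightB_node_le (a : α) (ts : List (RTree α)) (x : α) :
    rightB (node a ts) x ≤ (bracketList ts).length + 1 := by
  simp [rightB, bracket_node]

theorem leftB_node_ne {a x : α} (ts : List (RTree α)) (hx : x ≠ a) :
    1 ≤ leftB (node a ts) x := by
  rw [leftB, bracket_node, List.idxOf_cons_ne _ (fun e => hx e.symm)]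
  omega

theorem rightB_node_ne {a x : α} {ts : List (RTree α)} (hx : x ≠ a) :
    rightB (node a ts) x ≤ (bracketList ts).length := by
  have hrev : (bracket (node a ts)).reverse = a :: ((bracketList ts).reverse ++ [a]) := by
    simp [bracket_node]
  rw [rightB, hrev, List.idxOf_cons_ne _ (fun e => hx e.symm)]
  simp [bracket_node]

theorem sandwich {t s : RTree α} (h : Subtree t s) (hnd : (preorder t).Nodup) :
    ∃ P Q : List α, bracket t = P ++ bracket s ++ Q ∧
      ∀ x ∈ preorder s, x ∉ P ∧ x ∉ Q := by
  induction h with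
  | refl t => exact ⟨[], [], by simp, by simp⟩
  | @child t c s hc hsub ih =>
    rcases t with ⟨a, ts⟩
    have hc' : c ∈ ts := hc
    obtain ⟨l, r, rfl⟩ := List.append_of_mem hc'
    have hpre : preorder (node a (l ++ c :: r))
        = a :: (preorderList l ++ (preorder c ++ preorderList r)) := by
      simp [preorder, preorderList_append, preorderList]
    rw [hpre] at hnd
    simp only [List.nodup_cons, List.nodup_append', List.mem_append] at hnd
    obtain ⟨ha, hndl, ⟨hndc, hndr, hdisj2⟩, hdisj1⟩ := hnd
    obtain ⟨P₂, Q₂, hb2, hPQ2⟩ := ih hndc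
    refine ⟨a :: (bracketList l ++ P₂), Q₂ ++ (bracketList r ++ [a]), ?_, ?_⟩
    · have hbr : bracket (node a (l ++ c :: r))
          = a :: (bracketList l ++ (bracket c ++ (bracketList r ++ [a]))) := by
        simp [bracket_node, bracketList_append, bracketList]
      rw [hbr, hb2]
      simp
    · intro x hxs
      have hxc : x ∈ preorder c := (preorder_sublist hsub).subset hxs
      have hxa : x ≠ a := fun e => ha (Or.inr (Or.inl (e ▸ hxc)))
      have hxl : x ∉ preorderList l := fun hl' => hdisj1 hl' (List.mem_append.mpr (Or.inl hxc))
      have hxr : x ∉ preorderList r := fun hr' => hdisj2 hxc hr'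
      obtain ⟨hxP2, hxQ2⟩ := hPQ2 x hxs
      constructor
      · simp only [List.mem_cons, List.mem_append, mem_bracketList]
        push_neg
        exact ⟨hxa, hxl, hxP2⟩
      · simp only [List.mem_append, mem_bracketList, List.mem_singleton]
        push_neg
        exact ⟨hxQ2, hxr, hxa⟩

theorem leftB_lt_rightB {t : RTree α} (hnd : (preorder t).Nodup) {x : α}
    (hx : x ∈ preorder t) : leftB t x < rightB t x := by
  obtain ⟨s, hs, hl⟩ := exists_subtree_of_mem t hx
  obtain ⟨P, Q, hb, hPQ⟩ := sandwich hs hnd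
  have hmem : x ∈ preorder s := hl ▸ label_mem_preorder s
  obtain ⟨hxP, hxQ⟩ := hPQ x hmem
  obtain ⟨hL, hR⟩ := pos_shift hb ((mem_bracket s).mpr hmem) hxP hxQ
  rcases s with ⟨a, ts⟩
  have he : a = x := hl
  subst he
  rw [hL, hR, leftB_node_label, rightB_node_label]
  omega

theorem nest {t : RTree α} (hnd : (preorder t).Nodup) {a b : α} (h : Ancestor t a b) :
    leftB t a ≤ leftB t b ∧ rightB t b ≤ rightB t a ∧
      (a ≠ b → leftB t a < leftB t b ∧ rightB t b < rightB t a) := by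
  obtain ⟨s, hs, hl, hbmem⟩ := h
  obtain ⟨P, Q, hbr, hPQ⟩ := sandwich hs hnd
  have hamem : a ∈ preorder s := hl ▸ label_mem_preorder s
  obtain ⟨haP, haQ⟩ := hPQ a hamem
  obtain ⟨hbP, hbQ⟩ := hPQ b hbmem
  obtain ⟨hLa, hRa⟩ := pos_shift hbr ((mem_bracket s).mpr hamem) haP haQ
  obtain ⟨hLb, hRb⟩ := pos_shift hbr ((mem_bracket s).mpr hbmem) hbP hbQ
  rcases s with ⟨a', ts⟩
  have he : a' = a := hl
  subst he
  rw [hLa, hRa, hLb, hRb, leftB_node_label, rightB_node_label]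
  have h1 := rightB_node_le a' ts b
  refine ⟨by omega, by omega, fun hne => ?_⟩
  have hbne : b ≠ a' := fun e => hne e.symm
  have h2 := leftB_node_ne ts hbne
  have h3 := rightB_node_ne (ts := ts) hbne
  exact ⟨by omega, by omega⟩

theorem mem_preorderList_split {x : α} {ts : List (RTree α)} (h : x ∈ preorderList ts) :
    ∃ l c r, ts = l ++ c :: r ∧ x ∈ preorder c := by
  induction ts with
  | nil => simp [preorderList] at h
  | cons t ts ih =>
    rcases List.mem_append.mp (by simpa [preorderList] using h) with h | h
    · exact ⟨[], t, ts, rfl, h⟩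
    · obtain ⟨l, c, r, rfl, hc⟩ := ih h
      exact ⟨t :: l, c, r, rfl, hc⟩

theorem disj_aux (n : ℕ) : ∀ (t : RTree α), sizeOf t ≤ n → (preorder t).Nodup → ∀ (a b : α),
    a ∈ preorder t → b ∈ preorder t →
    ¬ Ancestor t a b → ¬ Ancestor t b a →
    (rightB t a < leftB t b ∨ rightB t b < leftB t a) := by
  induction n with
  | zero =>
    rintro ⟨rt, ts⟩ hsz
    simp at hsz
  | succ n ih =>
    rintro ⟨rt, ts⟩ hsz hnd a b ha hb h1 h2
    have hne_a : a ≠ rt := by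
      rintro rfl
      exact h1 ⟨node a ts, Subtree.refl _, rfl, hb⟩
    have hne_b : b ≠ rt := by
      rintro rfl
      exact h2 ⟨node b ts, Subtree.refl _, rfl, ha⟩
    have ha' : a ∈ preorderList ts := by
      rcases (by simpa [preorder] using ha : a = rt ∨ a ∈ preorderList ts) with h | h
      · exact absurd h hne_a
      · exact h
    have hb' : b ∈ preorderList ts := by
      rcases (by simpa [preorder] using hb : b = rt ∨ b ∈ preorderList ts) with h | h
      · exact absurd h hne_b
      · exact h
    obtain ⟨l, c, r, rfl, hac⟩ := mem_preorderList_split ha'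
    have hpre : preorder (node rt (l ++ c :: r))
        = rt :: (preorderList l ++ (preorder c ++ preorderList r)) := by
      simp [preorder, preorderList_append, preorderList]
    have hnd' := hnd
    rw [hpre] at hnd'
    simp only [List.nodup_cons, List.nodup_append', List.mem_append] at hnd'
    obtain ⟨hrt, hndl, ⟨hndc, hndr, hdisj2⟩, hdisj1⟩ := hnd'
    have hbr : bracket (node rt (l ++ c :: r))
        = (rt :: bracketList l) ++ bracket c ++ (bracketList r ++ [rt]) := by
      simp [bracket_node, bracketList_append, bracketList]
    have haM : a ∈ bracket c := (mem_bracket c).mpr hac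
    have hal : a ∉ preorderList l := fun h' => hdisj1 h' (List.mem_append.mpr (Or.inl hac))
    have har : a ∉ preorderList r := fun h' => hdisj2 hac h'
    have haP : a ∉ rt :: bracketList l := by
      simp only [List.mem_cons, mem_bracketList]
      push_neg
      exact ⟨hne_a, hal⟩
    have haQ : a ∉ bracketList r ++ [rt] := by
      simp only [List.mem_append, mem_bracketList, List.mem_singleton]
      push_neg
      exact ⟨har, hne_a⟩
    by_cases hbc : b ∈ preorder c
    · have hcmem : c ∈ children (node rt (l ++ c :: r)) := by
        show c ∈ l ++ c :: r
        simp
      have h1c : ¬ Ancestor c a b := by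
        rintro ⟨s, hs, h3, h4⟩
        exact h1 ⟨s, Subtree.child hcmem hs, h3, h4⟩
      have h2c : ¬ Ancestor c b a := by
        rintro ⟨s, hs, h3, h4⟩
        exact h2 ⟨s, Subtree.child hcmem hs, h3, h4⟩
      have hszc : sizeOf c ≤ n := by
        have h1' := List.sizeOf_lt_of_mem (show c ∈ l ++ c :: r by simp)
        have h2' : sizeOf (node rt (l ++ c :: r)) = 1 + sizeOf rt + sizeOf (l ++ c :: r) := by
          simp
        omega
      have key := ih c hszc hndc a b hac hbc h1c h2c
      have hbM : b ∈ bracket c := (mem_bracket c).mpr hbc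
      have hbl : b ∉ preorderList l := fun h' => hdisj1 h' (List.mem_append.mpr (Or.inl hbc))
      have hbrr : b ∉ preorderList r := fun h' => hdisj2 hbc h'
      have hbP : b ∉ rt :: bracketList l := by
        simp only [List.mem_cons, mem_bracketList]
        push_neg
        exact ⟨hne_b, hbl⟩
      have hbQ : b ∉ bracketList r ++ [rt] := by
        simp only [List.mem_append, mem_bracketList, List.mem_singleton]
        push_neg
        exact ⟨hbrr, hne_b⟩
      obtain ⟨hLa, hRa⟩ := pos_shift hbr haM haP haQ
      obtain ⟨hLb, hRb⟩ := pos_shift hbr hbM hbP hbQ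
      rcases key with key | key
      · left; omega
      · right; omega
    · have range_a := pos_range hbr haM haP haQ
      have hb'' : b ∈ preorderList l ∨ b ∈ preorderList r := by
        have : b ∈ preorderList l ++ (preorder c ++ preorderList r) := by
          simpa [preorderList_append, preorderList] using hb'
        rcases List.mem_append.mp this with h | h
        · exact Or.inl h
        · rcases List.mem_append.mp h with h | h
          · exact absurd h hbc
          · exact Or.inr h
      rcases hb'' with hbl | hbrr
      · right
        have hbr2 : bracket (node rt (l ++ c :: r))
            = [rt] ++ bracketList l ++ (bracket c ++ (bracketList r ++ [rt])) := by
          rw [hbr]; simp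
        have hbM2 : b ∈ bracketList l := (mem_bracketList l).mpr hbl
        have hbP2 : b ∉ ([rt] : List α) := by simpa using hne_b
        have hbQ2 : b ∉ bracket c ++ (bracketList r ++ [rt]) := by
          simp only [List.mem_append, mem_bracket, mem_bracketList, List.mem_singleton]
          push_neg
          refine ⟨hbc, fun h' => hdisj1 hbl (List.mem_append.mpr (Or.inr h')), hne_b⟩
        have range_b := pos_range hbr2 hbM2 hbP2 hbQ2
        simp only [List.length_cons, List.length_append, List.length_singleton,
          List.length_nil] at range_a range_b
        omega
      · left
        have hbr3 : bracket (node rt (l ++ c :: r))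
            = ((rt :: bracketList l) ++ bracket c) ++ bracketList r ++ [rt] := by
          rw [hbr]; simp
        have hbM3 : b ∈ bracketList r := (mem_bracketList r).mpr hbrr
        have hbP3 : b ∉ (rt :: bracketList l) ++ bracket c := by
          simp only [List.mem_append, List.mem_cons, mem_bracket, mem_bracketList]
          push_neg
          exact ⟨⟨hne_b, fun h' => hdisj1 h' (List.mem_append.mpr (Or.inr hbrr))⟩, hbc⟩
        have hbQ3 : b ∉ ([rt] : List α) := by simpa using hne_b
        have range_b := pos_range hbr3 hbM3 hbP3 hbQ3
        simp only [List.length_cons, List.length_append, List.length_singleton,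
          List.length_nil] at range_a range_b
        omega

theorem disj (t : RTree α) (hnd : (preorder t).Nodup) (a b : α)
    (ha : a ∈ preorder t) (hb : b ∈ preorder t)
    (h1 : ¬ Ancestor t a b) (h2 : ¬ Ancestor t b a) :
    rightB t a < leftB t b ∨ rightB t b < leftB t a :=
  disj_aux (sizeOf t) t le_rfl hnd a b ha hb h1 h2
end RTree

open RTree in
/-- adding a value `w` to the scores `s` of all bracket positions in the
interval `[left u, left v]` (where `u` is an ancestor of `v`) increases
`s[left x] - s[right x]` by `w` exactly for the vertices `x` on the path from `u`
to `v`, and leaves `s[left x] - s[right x]` unchanged for every vertex not on the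
path. -/
theorem bracket_interval_add_score {α : Type} [DecidableEq α]
    (t : RTree α) (hnd : (preorder t).Nodup) (u v : α)
    (hanc : Ancestor t u v)
    (s s' : ℕ → ℤ) (w : ℤ)
    (hs' : ∀ p, s' p = s p + (if leftB t u ≤ p ∧ p ≤ leftB t v then w else 0)) :
    ∀ x ∈ preorder t,
      ((Ancestor t u x ∧ Ancestor t x v) →
        s' (leftB t x) - s' (rightB t x) = (s (leftB t x) - s (rightB t x)) + w) ∧
      (¬ (Ancestor t u x ∧ Ancestor t x v) →
        s' (leftB t x) - s' (rightB t x) = s (leftB t x) - s (rightB t x)) := by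
  intro x hx
  obtain ⟨su, hsu, hlu, hvmem⟩ := hanc
  have hanc : Ancestor t u v := ⟨su, hsu, hlu, hvmem⟩
  have hu : u ∈ preorder t := (preorder_sublist hsu).subset (hlu ▸ label_mem_preorder su)
  have hv : v ∈ preorder t := (preorder_sublist hsu).subset hvmem
  have hancuu : Ancestor t u u := ⟨su, hsu, hlu, hlu ▸ label_mem_preorder su⟩
  have hancvv : Ancestor t v v := by
    obtain ⟨sv, hsv, hlv⟩ := exists_subtree_of_mem t hv
    exact ⟨sv, hsv, hlv, hlv ▸ label_mem_preorder sv⟩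
  set L := leftB t u with hL
  set R := leftB t v with hR
  obtain ⟨hn1', hn2', -⟩ := nest hnd hanc
  have hRv : R < rightB t v := leftB_lt_rightB hnd hv
  have hin : ∀ p, L ≤ p → p ≤ R → s' p = s p + w := by
    intro p h1 h2
    rw [hs' p, if_pos ⟨h1, h2⟩]
  have hout : ∀ p, (p < L ∨ R < p) → s' p = s p := by
    intro p h
    rw [hs' p, if_neg (by omega)]
    ring
  constructor
  · rintro ⟨h1, h2⟩
    obtain ⟨hn1, -, -⟩ := nest hnd h1
    obtain ⟨hn2, hn2r, -⟩ := nest hnd h2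
    rw [hin _ hn1 hn2, hout _ (Or.inr (lt_of_lt_of_le hRv hn2r))]
    ring
  · intro hnot
    by_cases hux : Ancestor t u x
    · have hxv : ¬ Ancestor t x v := fun h => hnot ⟨hux, h⟩
      have hxnev : x ≠ v := fun e => hxv (e ▸ hancvv)
      have hx2 : leftB t x < rightB t x := leftB_lt_rightB hnd hx
      by_cases hvx : Ancestor t v x
      · obtain ⟨-, -, hstrict⟩ := nest hnd hvx
        obtain ⟨hlt, -⟩ := hstrict (fun e => hxnev e.symm)
        rw [hout _ (Or.inr hlt), hout _ (Or.inr (by omega))]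
      · rcases disj t hnd x v hx hv hxv hvx with key | key
        · obtain ⟨hn1, -, -⟩ := nest hnd hux
          rw [hin _ hn1 (by omega), hin _ (by omega) (by omega)]
          ring
        · rw [hout _ (Or.inr (by omega)), hout _ (Or.inr (by omega))]
    · have hxneu : x ≠ u := fun e => hux (e ▸ hancuu)
      have hx2 : leftB t x < rightB t x := leftB_lt_rightB hnd hx
      by_cases hxu : Ancestor t x u
      · obtain ⟨-, -, hstrict⟩ := nest hnd hxu
        obtain ⟨hlt, hrt⟩ := hstrict hxneu
        rw [hout _ (Or.inl hlt), hout _ (Or.inr (by omega))]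
      · rcases disj t hnd x u hx hu hxu hux with key | key
        · rw [hout _ (Or.inl (by omega)), hout _ (Or.inl (by omega))]
        · rw [hout _ (Or.inr (by omega)), hout _ (Or.inr (by omega))]
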